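/- arXiv:1103.2795 — 3 statements merged into one kernel-verified Lean document; each statement's English description precedes it below -/
import Mathlib

section
/- Let L be the Laplacian of a connected weighted graph partitioned as [[L_gg, L_gl],[L_lg, L_ll]] with at least one node in each block. Then the Schur complement L_gg - L_gl L_ll^{-1} L_lg is symmetric positive semidefinite with kernel containing the all-ones vector. -/
open Matrix

open scoped ComplexOrder

/-!
A principal block of a positive semidefinite matrix is positive semidefinite, hence positive
definite once its determinant is a unit, and the Schur complement of a positive definite block
of a positive semidefinite matrix is positive semidefinite. For the kernel: if `(u, v)` is
annihilated by `[[A, B], [C, D]]`, the second block row gives `D⁻¹ C u = -v`, so the Schur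
complement sends `u` to `A u + B v = 0`; apply this to the all-ones vector.
-/

namespace Matrix

variable {l m R : Type*} [Fintype l] [Fintype m] [DecidableEq m]

theorem schur_complement₂₂_mulVec_eq_zero [CommRing R] {A : Matrix l l R} {B : Matrix l m R}
    {C : Matrix m l R} {D : Matrix m m R} (hD : IsUnit D.det) {x : l ⊕ m → R}
    (hx : fromBlocks A B C D *ᵥ x = 0) :
    (A - B * D⁻¹ * C) *ᵥ (x ∘ Sum.inl) = 0 := by
  rw [← Sum.elim_comp_inl_inr x, fromBlocks_mulVec, Sum.elim_comp_inl, Sum.elim_comp_inr,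
    ← Sum.elim_zero_zero, Sum.elim_eq_iff] at hx
  obtain ⟨hx₁, hx₂⟩ := hx
  have hCx : C *ᵥ (x ∘ Sum.inl) = -(D *ᵥ (x ∘ Sum.inr)) := eq_neg_of_add_eq_zero_left hx₂
  rw [sub_mulVec, Matrix.mul_assoc, ← mulVec_mulVec, ← mulVec_mulVec, hCx, mulVec_neg,
    mulVec_mulVec, nonsing_inv_mul _ hD, one_mulVec, mulVec_neg, sub_neg_eq_add]
  exact hx₁

theorem PosSemidef.schur_complement₂₂ {𝕜 : Type*} [RCLike 𝕜] {A : Matrix l l 𝕜}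
    {B : Matrix l m 𝕜} {C : Matrix m l 𝕜} {D : Matrix m m 𝕜}
    (h : (fromBlocks A B C D).PosSemidef) (hD : IsUnit D.det) :
    (A - B * D⁻¹ * C).PosSemidef := by
  obtain ⟨-, hBC, -, -⟩ := isHermitian_fromBlocks_iff.mp h.1
  subst hBC
  have hDpd : D.PosDef :=
    (h.submatrix Sum.inr).posDef_iff_isUnit.mpr ((isUnit_iff_isUnit_det D).mpr hD)
  have := invertibleOfIsUnitDet D hD
  exact (PosDef.fromBlocks₂₂ A B hDpd).mp h

end Matrix

theorem kron_reduced_laplacian_posSemidef_ones_in_kernel_general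
    {n m : ℕ}
    (L : Matrix (Fin n ⊕ Fin m) (Fin n ⊕ Fin m) ℝ)
    (hpsd : L.PosSemidef)
    (hrow : L.mulVec (fun _ => (1 : ℝ)) = 0)
    (Lgg : Matrix (Fin n) (Fin n) ℝ) (hgg : Lgg = L.toBlocks₁₁)
    (Lgl : Matrix (Fin n) (Fin m) ℝ) (hgl : Lgl = L.toBlocks₁₂)
    (Llg : Matrix (Fin m) (Fin n) ℝ) (hlg : Llg = L.toBlocks₂₁)
    (Lll : Matrix (Fin m) (Fin m) ℝ) (hll : Lll = L.toBlocks₂₂)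
    (hinv : IsUnit Lll.det) :
    (Lgg - Lgl * Lll⁻¹ * Llg).PosSemidef ∧
      (Lgg - Lgl * Lll⁻¹ * Llg).mulVec (fun _ => (1 : ℝ)) = 0 := by
  subst hgg hgl hlg hll
  rw [← fromBlocks_toBlocks L] at hpsd hrow
  exact ⟨hpsd.schur_complement₂₂ hinv, schur_complement₂₂_mulVec_eq_zero hinv hrow⟩

/-- Let `L` be the Laplacian of a connected weighted graph, partitioned into
blocks `[[L_gg, L_gl],[L_lg, L_ll]]` (indexing by `Fin n ⊕ Fin m`, each block nonempty).
`L` is symmetric positive semidefinite with zero row sums, and `L_ll` is invertible (by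
connectivity).  Then the Schur complement (Kron-reduced Laplacian)
`L_gg - L_gl * L_ll⁻¹ * L_lg` is symmetric positive semidefinite and its kernel contains the
all-ones vector. -/
theorem kron_reduced_laplacian_posSemidef_ones_in_kernel
    {n m : ℕ} (hn : 0 < n) (hm : 0 < m)
    (L : Matrix (Fin n ⊕ Fin m) (Fin n ⊕ Fin m) ℝ)
    (hsym : L.IsSymm)
    (hpsd : L.PosSemidef)
    (hrow : L.mulVec (fun _ => (1 : ℝ)) = 0)
    (Lgg : Matrix (Fin n) (Fin n) ℝ) (hgg : Lgg = L.toBlocks₁₁)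
    (Lgl : Matrix (Fin n) (Fin m) ℝ) (hgl : Lgl = L.toBlocks₁₂)
    (Llg : Matrix (Fin m) (Fin n) ℝ) (hlg : Llg = L.toBlocks₂₁)
    (Lll : Matrix (Fin m) (Fin m) ℝ) (hll : Lll = L.toBlocks₂₂)
    (hinv : IsUnit Lll.det) :
    (Lgg - Lgl * Lll⁻¹ * Llg).PosSemidef ∧
      (Lgg - Lgl * Lll⁻¹ * Llg).mulVec (fun _ => (1 : ℝ)) = 0 :=
  kron_reduced_laplacian_posSemidef_ones_in_kernel_general L hpsd hrow Lgg hgg Lgl hgl Llg hlg Lll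
    hll hinv
end

section
/- Let A + GC be a Hurwitz matrix (all eigenvalues have negative real part) and suppose the quadruple (A+GC, −(B+GD), C, −D) has no invariant zeros and [B+GD; D] has full column rank. Consider ė = (A+GC)e − (B+GD)u, r = Ce − Du with e(0) = 0. Then r(t) = 0 for all t ≥ 0 implies u(t) = 0 for almost all t ≥ 0 (for piecewise-continuous u), and conversely u ≡ 0 implies r ≡ 0. -/
/-!
Write `Ā = A + G C` and `B̄ = B + G D`. If `r ≡ 0` on `[0, ∞)`, the span `V` of `{e t | t ≥ 0}`
is output-nulling controlled invariant: being closed, `V` contains the derivatives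
`Ā e t - B̄ u t`, while `C e t - D u t = 0`. Such a `V` has a friend `F`, with `(Ā - B̄ F) V ⊆ V`
and `(C - D F) V = 0`, and an eigenvector `z` of `Ā - B̄ F` in the complexification of `V` would
be an invariant zero with input direction `F z`. So `V = 0`, i.e. `e ≡ 0` on `[0, ∞)`; then
`B̄ u t` (minus the one-sided derivative of `e`) and `D u t` vanish, and the rank condition gives
`u t = 0`. Conversely, for `u ≡ 0` the error solves `ė = Ā e`, `e 0 = 0`, so `e ≡ 0` by
uniqueness of solutions.
-/

open Matrix Set

theorem Submodule.exists_linearMap_mem_of_le_map_fst {K E M : Type*} [Field K]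
    [AddCommGroup E] [Module K E] [AddCommGroup M] [Module K M] (S : Submodule K (E × M))
    {V : Submodule K E} (hV : V ≤ S.map (LinearMap.fst K E M)) :
    ∃ F : E →ₗ[K] M, ∀ v ∈ V, (v, F v) ∈ S := by
  let π := (LinearMap.fst K E M).domRestrict S
  have hVπ : V ≤ LinearMap.range π := by rwa [LinearMap.range_domRestrict]
  obtain ⟨σ, hσ⟩ := Module.projective_lifting_property π.rangeRestrict
    (Submodule.inclusion hVπ) π.surjective_rangeRestrict
  obtain ⟨F, hF⟩ := ((LinearMap.snd K E M).domRestrict S ∘ₗ σ).exists_extend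
  refine ⟨F, fun v hv => ?_⟩
  have hfst : ((σ ⟨v, hv⟩ : S) : E × M).1 = v :=
    congr_arg Subtype.val (LinearMap.congr_fun hσ ⟨v, hv⟩)
  have hsnd : ((σ ⟨v, hv⟩ : S) : E × M).2 = F v := (LinearMap.congr_fun hF ⟨v, hv⟩).symm
  have hσv : (v, F v) = σ ⟨v, hv⟩ := Prod.ext hfst.symm hsnd.symm
  exact hσv ▸ (σ ⟨v, hv⟩).2

theorem Module.End.exists_hasEigenvector_mem {K V : Type*} [Field K] [IsAlgClosed K]
    [AddCommGroup V] [Module K V] [FiniteDimensional K V] (f : Module.End K V)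
    {W : Submodule K V} (hW : W ≠ ⊥) (hf : ∀ w ∈ W, f w ∈ W) :
    ∃ μ : K, ∃ z ∈ W, f.HasEigenvector μ z := by
  have := Submodule.nontrivial_iff_ne_bot.2 hW
  obtain ⟨μ, hμ⟩ := Module.End.exists_eigenvalue (f.restrict hf)
  obtain ⟨z, hz⟩ := hμ.exists_hasEigenvector
  refine ⟨μ, z, z.2, ?_, by simpa using hz.2⟩
  exact Module.End.mem_eigenspace_iff.2 (congr_arg Subtype.val hz.apply_eq_smul)

section OutputNulling

variable {K ι κ ο : Type*} [Fintype ι] [Fintype κ]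

/-- The Rosenbrock matrix `[s I - A, B; C, -D]` (of `ẋ = A x - B u`, `y = C x - D u`) has trivial
kernel for every `s`. -/
def HasNoInvariantZeros [Field K] (A : Matrix ι ι K) (B : Matrix ι κ K) (C : Matrix ο ι K)
    (D : Matrix ο κ K) : Prop :=
  ∀ (s : K) (w : ι → K) (g : κ → K), s • w - A *ᵥ w + B *ᵥ g = 0 → C *ᵥ w - D *ᵥ g = 0 →
    w = 0 ∧ g = 0

def outputNullingPairs [CommRing K] (A : Matrix ι ι K) (B : Matrix ι κ K) (C : Matrix ο ι K)
    (D : Matrix ο κ K) (V : Submodule K (ι → K)) : Submodule K ((ι → K) × (κ → K)) :=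
  V.comap (A.mulVecLin.coprod (-B.mulVecLin)) ⊓ LinearMap.ker (C.mulVecLin.coprod (-D.mulVecLin))

theorem mem_outputNullingPairs [CommRing K] {A : Matrix ι ι K} {B : Matrix ι κ K}
    {C : Matrix ο ι K} {D : Matrix ο κ K} {V : Submodule K (ι → K)} {w : ι → K} {g : κ → K} :
    (w, g) ∈ outputNullingPairs A B C D V ↔ A *ᵥ w - B *ᵥ g ∈ V ∧ C *ᵥ w - D *ᵥ g = 0 := by
  simp [outputNullingPairs, sub_eq_add_neg]

def IsOutputNullingInvariant [CommRing K] (A : Matrix ι ι K) (B : Matrix ι κ K)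
    (C : Matrix ο ι K) (D : Matrix ο κ K) (V : Submodule K (ι → K)) : Prop :=
  V ≤ (outputNullingPairs A B C D V).map (LinearMap.fst K _ _)

theorem IsOutputNullingInvariant.exists_friend [Field K] {A : Matrix ι ι K} {B : Matrix ι κ K}
    {C : Matrix ο ι K} {D : Matrix ο κ K} {V : Submodule K (ι → K)}
    (hV : IsOutputNullingInvariant A B C D V) :
    ∃ F : Matrix κ ι K, ∀ w ∈ V, (A - B * F) *ᵥ w ∈ V ∧ (C - D * F) *ᵥ w = 0 := by
  classical
  obtain ⟨F, hF⟩ := Submodule.exists_linearMap_mem_of_le_map_fst _ hV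
  refine ⟨F.toMatrix', fun w hw => ?_⟩
  simpa [sub_mulVec, ← mulVec_mulVec] using mem_outputNullingPairs.1 (hF w hw)

theorem HasNoInvariantZeros.eq_bot_of_friend [Field K] [IsAlgClosed K]
    {A : Matrix ι ι K} {B : Matrix ι κ K} {C : Matrix ο ι K} {D : Matrix ο κ K}
    (hz : HasNoInvariantZeros A B C D) (F : Matrix κ ι K) {W : Submodule K (ι → K)}
    (hL : ∀ w ∈ W, (A - B * F) *ᵥ w ∈ W) (hN : ∀ w ∈ W, (C - D * F) *ᵥ w = 0) : W = ⊥ := by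
  by_contra hW
  obtain ⟨μ, z, hzW, hμ⟩ := Module.End.exists_hasEigenvector_mem (A - B * F).mulVecLin hW hL
  have hLz : (A - B * F) *ᵥ z = μ • z := hμ.apply_eq_smul
  refine hμ.2 (hz μ z (F *ᵥ z) ?_ ?_).1
  · rw [← hLz, sub_mulVec, mulVec_mulVec]
    abel
  · rw [mulVec_mulVec, ← sub_mulVec]
    exact hN z hzW

end OutputNulling

section Complexification

variable {ι κ ο : Type*}

def complexSpan (V : Submodule ℝ (ι → ℝ)) : Submodule ℂ (ι → ℂ) :=
  Submodule.span ℂ ((fun (v : ι → ℝ) i => (v i : ℂ)) '' V)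

theorem complexSpan_eq_bot_iff {V : Submodule ℝ (ι → ℝ)} : complexSpan V = ⊥ ↔ V = ⊥ := by
  rw [complexSpan, Submodule.span_eq_bot, Submodule.eq_bot_iff]
  simp only [funext_iff, Pi.zero_apply, mem_image, SetLike.mem_coe, forall_exists_index, and_imp]
  refine ⟨fun h w hw i => ?_, fun h x w hw hwx i => ?_⟩
  · exact_mod_cast h _ w hw (fun _ => rfl) i
  · rw [← hwx, h w hw i, Complex.ofReal_zero]

theorem mulVec_mem_complexSpan [Fintype ι] (M : Matrix κ ι ℝ) {V : Submodule ℝ (ι → ℝ)}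
    {V' : Submodule ℝ (κ → ℝ)} (hM : ∀ w ∈ V, M *ᵥ w ∈ V') {z : ι → ℂ}
    (hz : z ∈ complexSpan V) : M.map (↑) *ᵥ z ∈ complexSpan V' := by
  suffices complexSpan V ≤ (complexSpan V').comap (M.map (↑)).mulVecLin from this hz
  refine Submodule.span_le.2 ?_
  rintro _ ⟨w, hw, rfl⟩
  have hcast : M.map (↑) *ᵥ (fun i => (w i : ℂ)) = fun i => ((M *ᵥ w) i : ℂ) :=
    funext fun i => (RingHom.map_mulVec Complex.ofRealHom M w i).symm
  rw [SetLike.mem_coe, Submodule.mem_comap, mulVecLin_apply, hcast]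
  exact Submodule.subset_span ⟨_, hM w hw, rfl⟩

theorem map_ofReal_sub_mul [Fintype κ] (A : Matrix ο ι ℝ) (B : Matrix ο κ ℝ)
    (F : Matrix κ ι ℝ) : (A - B * F).map ((↑) : ℝ → ℂ) = A.map (↑) - B.map (↑) * F.map (↑) := by
  rw [Matrix.map_sub _ Complex.ofReal_sub]
  exact congrArg _ (Matrix.map_mul (f := Complex.ofRealHom))

theorem HasNoInvariantZeros.eq_bot_of_isOutputNullingInvariant [Fintype ι] [Fintype κ]
    {A : Matrix ι ι ℝ} {B : Matrix ι κ ℝ} {C : Matrix ο ι ℝ} {D : Matrix ο κ ℝ}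
    (hz : HasNoInvariantZeros (A.map (↑)) (B.map (↑)) (C.map (↑)) (D.map ((↑) : ℝ → ℂ)))
    {V : Submodule ℝ (ι → ℝ)} (hV : IsOutputNullingInvariant A B C D V) : V = ⊥ := by
  obtain ⟨F, hF⟩ := hV.exists_friend
  rw [← complexSpan_eq_bot_iff]
  refine hz.eq_bot_of_friend (F.map (↑)) (fun z hzV => ?_) (fun z hzV => ?_)
  · have hL := mulVec_mem_complexSpan (A - B * F) (fun w hw => (hF w hw).1) hzV
    rwa [map_ofReal_sub_mul] at hL
  · have hN := mulVec_mem_complexSpan (C - D * F) (V' := ⊥) (fun w hw => by simp [(hF w hw).2]) hzV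
    rwa [complexSpan_eq_bot_iff.2 rfl, Submodule.mem_bot, map_ofReal_sub_mul] at hN

end Complexification

section Trajectories

variable {E : Type*} [NormedAddCommGroup E] [NormedSpace ℝ E]

theorem HasDerivWithinAt.mem_span_image_Ici [FiniteDimensional ℝ E] {f : ℝ → E} {f' : E}
    {a t : ℝ} (hf : HasDerivWithinAt f f' (Ici a) t) (ht : a ≤ t) :
    f' ∈ Submodule.span ℝ (f '' Ici a) := by
  have hmem := range_derivWithin_subset_closure_span_image f (s := Ici a) (t := Ici a)
    (by rw [inter_self]; exact subset_closure) ⟨t, rfl⟩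
  rwa [(Submodule.closed_of_finiteDimensional _).closure_eq,
    hf.derivWithin (uniqueDiffOn_Ici a t ht)] at hmem

theorem HasDerivWithinAt.eq_zero_of_eqOn_Ici {f : ℝ → E} {f' : E} {t : ℝ}
    (hf : HasDerivWithinAt f f' (Ici t) t) (h0 : EqOn f 0 (Ici t)) : f' = 0 :=
  (uniqueDiffWithinAt_Ici t).eq_deriv _ hf
    ((hasDerivWithinAt_const t _ 0).congr h0 (h0 self_mem_Ici))

theorem eqOn_zero_of_hasDerivWithinAt_mulVec {ι : Type*} [Fintype ι] {A : Matrix ι ι ℝ}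
    {e : ℝ → ι → ℝ} {a b : ℝ} (hc : ContinuousOn e (Icc a b))
    (he : ∀ t ∈ Ico a b, HasDerivWithinAt e (A *ᵥ e t) (Ici t) t) (ha : e a = 0) :
    EqOn e 0 (Icc a b) :=
  ODE_solution_unique (v := fun _ => (A *ᵥ ·))
    (fun _ => A.mulVecLin.toContinuousLinearMap.lipschitz) hc he continuousOn_const
    (fun t _ => by rw [Pi.zero_apply, mulVec_zero]; exact hasDerivWithinAt_const t (Ici t) 0) ha

end Trajectories

theorem detection_filter_residual_zero_iff_attack_zero_general {n m p : ℕ}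
    (A : Matrix (Fin n) (Fin n) ℝ) (B : Matrix (Fin n) (Fin m) ℝ)
    (C : Matrix (Fin p) (Fin n) ℝ) (D : Matrix (Fin p) (Fin m) ℝ)
    (G : Matrix (Fin n) (Fin p) ℝ)
    (hnozeros : ∀ (s : ℂ) (w : Fin n → ℂ) (g : Fin m → ℂ),
      s • w - ((A + G * C).map (Complex.ofReal ·)).mulVec w
          + ((B + G * D).map (Complex.ofReal ·)).mulVec g = 0 →
      (C.map (Complex.ofReal ·)).mulVec w - (D.map (Complex.ofReal ·)).mulVec g = 0 →
      w = 0 ∧ g = 0)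
    (hrank : ∀ g : Fin m → ℝ, (B + G * D).mulVec g = 0 → D.mulVec g = 0 → g = 0)
    (e : ℝ → Fin n → ℝ) (u : ℝ → Fin m → ℝ)
    (he0 : e 0 = 0)
    (hode : ∀ t : ℝ, HasDerivAt e
      ((A + G * C).mulVec (e t) - (B + G * D).mulVec (u t)) t)
    (r : ℝ → Fin p → ℝ)
    (hr : ∀ t : ℝ, r t = C.mulVec (e t) - D.mulVec (u t)) :
    (∀ t : ℝ, 0 ≤ t → r t = 0) ↔ (∀ t : ℝ, 0 ≤ t → u t = 0) := by
  constructor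
  · intro hr0
    set V := Submodule.span ℝ (e '' Ici 0)
    have hpairs : ∀ t, 0 ≤ t → (e t, u t) ∈ outputNullingPairs (A + G * C) (B + G * D) C D V :=
      fun t ht => mem_outputNullingPairs.2
        ⟨(hode t).hasDerivWithinAt.mem_span_image_Ici ht, by rw [← hr t, hr0 t ht]⟩
    have hV : V = ⊥ := HasNoInvariantZeros.eq_bot_of_isOutputNullingInvariant hnozeros <|
      Submodule.span_le.2 fun _ ⟨t, ht, hte⟩ => ⟨_, hpairs t ht, hte⟩
    have he : ∀ t, 0 ≤ t → e t = 0 := fun t ht => by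
      have heV : e t ∈ V := Submodule.subset_span (mem_image_of_mem e ht)
      rwa [hV, Submodule.mem_bot] at heV
    intro t ht
    refine hrank _ ?_ ?_
    · simpa [he t ht] using (hode t).hasDerivWithinAt.eq_zero_of_eqOn_Ici
        fun s hs => he s (ht.trans hs)
    · simpa [he t ht] using (mem_outputNullingPairs.1 (hpairs t ht)).2
  · intro hu0 t ht
    have he : EqOn e 0 (Icc 0 t) := eqOn_zero_of_hasDerivWithinAt_mulVec
      (fun s _ => (hode s).continuousAt.continuousWithinAt)
      (fun s hs => by simpa [hu0 s hs.1] using (hode s).hasDerivWithinAt) he0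
    rw [hr t, he ⟨ht, le_rfl⟩, hu0 t ht]
    simp

/-- Consider the detection-filter error dynamics
`ė = (A+GC) e - (B+GD) u`, `r = C e - D u` with `e(0) = 0`, where `A + GC` is Hurwitz,
the quadruple `(A+GC, -(B+GD), C, -D)` has no invariant zeros (over `ℂ`), and
`[B+GD; D]` has full column rank.  Then, for a continuous input `u`, the residual satisfies
`r(t) = 0` for all `t ≥ 0` iff `u(t) = 0` for all `t ≥ 0`. -/
theorem detection_filter_residual_zero_iff_attack_zero {n m p : ℕ}
    (A : Matrix (Fin n) (Fin n) ℝ) (B : Matrix (Fin n) (Fin m) ℝ)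
    (C : Matrix (Fin p) (Fin n) ℝ) (D : Matrix (Fin p) (Fin m) ℝ)
    (G : Matrix (Fin n) (Fin p) ℝ)
    (hHurwitz : ∀ μ : ℂ, μ ∈ spectrum ℂ ((A + G * C).map (Complex.ofReal ·)) → μ.re < 0)
    (hnozeros : ∀ (s : ℂ) (w : Fin n → ℂ) (g : Fin m → ℂ),
      s • w - ((A + G * C).map (Complex.ofReal ·)).mulVec w
          + ((B + G * D).map (Complex.ofReal ·)).mulVec g = 0 →
      (C.map (Complex.ofReal ·)).mulVec w - (D.map (Complex.ofReal ·)).mulVec g = 0 →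
      w = 0 ∧ g = 0)
    (hrank : ∀ g : Fin m → ℝ, (B + G * D).mulVec g = 0 → D.mulVec g = 0 → g = 0)
    (e : ℝ → Fin n → ℝ) (u : ℝ → Fin m → ℝ) (hu : Continuous u)
    (he0 : e 0 = 0)
    (hode : ∀ t : ℝ, HasDerivAt e
      ((A + G * C).mulVec (e t) - (B + G * D).mulVec (u t)) t)
    (r : ℝ → Fin p → ℝ)
    (hr : ∀ t : ℝ, r t = C.mulVec (e t) - D.mulVec (u t)) :
    (∀ t : ℝ, 0 ≤ t → r t = 0) ↔ (∀ t : ℝ, 0 ≤ t → u t = 0) :=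
  detection_filter_residual_zero_iff_attack_zero_general A B C D G hnozeros hrank e u he0 hode r hr
end

section
/- There exists an attack set K of cardinality at most k that is unidentifiable by a static detector if and only if there exists an attack set K̄ of cardinality at most 2k that is undetectable by a static detector. -/
open Matrix

/-- A static attack vector for the attack set `K`: its nonzero entries are exactly those
indexed by `K`. -/
def IsStaticAttackVector {q : ℕ} (K : Finset (Fin q)) (g : Fin q → ℝ) : Prop :=
  ∀ i : Fin q, g i ≠ 0 ↔ i ∈ K

/-- The attack set `K` is undetectable by a Static Detector: some nonzero attack vector
supported exactly on `K` produces a measurement consistent with some state,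
`C x + D g = 0` (by linearity). -/
def StaticallyUndetectable {n p q : ℕ} (C : Matrix (Fin p) (Fin n) ℝ)
    (D : Matrix (Fin p) (Fin q) ℝ) (K : Finset (Fin q)) : Prop :=
  ∃ (x : Fin n → ℝ) (g : Fin q → ℝ), g ≠ 0 ∧ IsStaticAttackVector K g ∧
    C.mulVec x + D.mulVec g = 0

/-- The attack set `K` is unidentifiable by a Static Detector: its effect on the
measurements can be reproduced by a distinct attack set `R` with `|R| ≤ |K|`. -/
def StaticallyUnidentifiable {n p q : ℕ} (C : Matrix (Fin p) (Fin n) ℝ)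
    (D : Matrix (Fin p) (Fin q) ℝ) (K : Finset (Fin q)) : Prop :=
  ∃ R : Finset (Fin q), R.card ≤ K.card ∧ R ≠ K ∧
    ∃ (xK xR : Fin n → ℝ) (gK gR : Fin q → ℝ),
      IsStaticAttackVector K gK ∧ IsStaticAttackVector R gR ∧
      C.mulVec xK + D.mulVec gK = C.mulVec xR + D.mulVec gR

/-
Unidentifiability and undetectability are linked by linearity. If the attacks on `K` and on
`R ≠ K` yield the same measurement, their difference is a nonzero undetectable attack supported
on `K ∪ R`. Conversely, an undetectable attack `g` on `K̄` splits as `g = g|_K + g|_{K̄ \ K}`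
with `K` holding half of `K̄` rounded up, so `C x + D g|_K = C 0 + D (-g|_{K̄ \ K})`, and the
attack on `K` cannot be told apart from one on the smaller set `K̄ \ K`.
-/

theorem Finset.exists_half_subset {α : Type*} [DecidableEq α] {s : Finset α} (hs : s.Nonempty) :
    ∃ t ⊆ s, t.Nonempty ∧ (s \ t).card ≤ t.card ∧ 2 * t.card ≤ s.card + 1 := by
  obtain ⟨t, hts, ht⟩ := Finset.exists_subset_card_eq (show (s.card + 1) / 2 ≤ s.card by omega)
  have hs_pos := hs.card_pos
  refine ⟨t, hts, Finset.card_pos.mp (by omega), ?_, by omega⟩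
  rw [Finset.card_sdiff_of_subset hts]
  omega

section AttackVector

variable {q : ℕ} {K R : Finset (Fin q)} {g gK gR : Fin q → ℝ}

theorem isStaticAttackVector_iff_support_eq :
    IsStaticAttackVector K g ↔ Function.support g = K := by
  simp only [IsStaticAttackVector, Set.ext_iff, Function.mem_support, Finset.mem_coe]

theorem isStaticAttackVector_filter_ne_zero (g : Fin q → ℝ) :
    IsStaticAttackVector (Finset.univ.filter (g · ≠ 0)) g := by
  simp [IsStaticAttackVector]

theorem IsStaticAttackVector.nonempty (hg : IsStaticAttackVector K g) (h : g ≠ 0) :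
    K.Nonempty := by
  obtain ⟨i, hi⟩ := Function.ne_iff.mp h
  exact ⟨i, (hg i).mp hi⟩

theorem IsStaticAttackVector.neg (hg : IsStaticAttackVector K g) :
    IsStaticAttackVector K (-g) := by
  rwa [isStaticAttackVector_iff_support_eq, Function.support_neg,
    ← isStaticAttackVector_iff_support_eq]

theorem IsStaticAttackVector.indicator (hg : IsStaticAttackVector K g) (s : Finset (Fin q)) :
    IsStaticAttackVector (s ∩ K) ((s : Set (Fin q)).indicator g) := by
  rw [isStaticAttackVector_iff_support_eq] at hg ⊢
  rw [Set.support_indicator, hg, Finset.coe_inter]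

theorem IsStaticAttackVector.sub_ne_zero (hK : IsStaticAttackVector K gK)
    (hR : IsStaticAttackVector R gR) (hRK : R ≠ K) : gK - gR ≠ 0 := by
  rw [_root_.sub_ne_zero]
  rintro rfl
  rw [isStaticAttackVector_iff_support_eq] at hK hR
  exact hRK (Finset.coe_injective (hR.symm.trans hK))

theorem IsStaticAttackVector.filter_sub_ne_zero_subset (hK : IsStaticAttackVector K gK)
    (hR : IsStaticAttackVector R gR) :
    Finset.univ.filter (fun i => (gK - gR) i ≠ 0) ⊆ K ∪ R := by
  rw [isStaticAttackVector_iff_support_eq] at hK hR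
  rw [← Finset.coe_subset, Finset.coe_filter_univ, Finset.coe_union, ← hK, ← hR]
  exact Function.support_sub gK gR

end AttackVector

section Detector

variable {n p q : ℕ} {C : Matrix (Fin p) (Fin n) ℝ} {D : Matrix (Fin p) (Fin q) ℝ}
  {K Kbar : Finset (Fin q)}

theorem StaticallyUnidentifiable.exists_staticallyUndetectable
    (h : StaticallyUnidentifiable C D K) :
    ∃ Kbar : Finset (Fin q), Kbar.card ≤ 2 * K.card ∧ StaticallyUndetectable C D Kbar := by
  obtain ⟨R, hRK, hR_ne, xK, xR, gK, gR, hgK, hgR, heq⟩ := h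
  refine ⟨Finset.univ.filter (fun i => (gK - gR) i ≠ 0), ?_,
    xK - xR, gK - gR, hgK.sub_ne_zero hgR hR_ne, isStaticAttackVector_filter_ne_zero _, ?_⟩
  · calc _ ≤ (K ∪ R).card := Finset.card_le_card (hgK.filter_sub_ne_zero_subset hgR)
      _ ≤ K.card + R.card := Finset.card_union_le K R
      _ ≤ 2 * K.card := by omega
  · rw [mulVec_sub, mulVec_sub, sub_add_sub_comm, heq, sub_self]

theorem StaticallyUndetectable.exists_staticallyUnidentifiable
    (h : StaticallyUndetectable C D Kbar) :
    ∃ K : Finset (Fin q), 2 * K.card ≤ Kbar.card + 1 ∧ StaticallyUnidentifiable C D K := by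
  obtain ⟨x, g, hg_ne, hg, heq⟩ := h
  obtain ⟨K, hK_sub, hK_ne, hR_card, hK_card⟩ := Finset.exists_half_subset (hg.nonempty hg_ne)
  have hR_ne : Kbar \ K ≠ K := fun hRK => by
    have hdisj : Disjoint (Kbar \ K) K := Finset.sdiff_disjoint
    rw [hRK] at hdisj
    exact hK_ne.ne_empty (disjoint_self.mp hdisj)
  have hgK : IsStaticAttackVector K ((K : Set (Fin q)).indicator g) := by
    simpa only [Finset.inter_eq_left.mpr hK_sub] using hg.indicator K
  have hgR : IsStaticAttackVector (Kbar \ K) (-((K : Set (Fin q))ᶜ.indicator g)) := by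
    rw [Finset.sdiff_eq_inter_compl, Finset.inter_comm, ← Finset.coe_compl]
    exact (hg.indicator Kᶜ).neg
  refine ⟨K, hK_card, Kbar \ K, hR_card, hR_ne, x, 0, _, _, hgK, hgR, ?_⟩
  rw [mulVec_zero, zero_add, mulVec_neg, ← sub_eq_zero, sub_neg_eq_add, add_assoc,
    ← mulVec_add, Set.indicator_self_add_compl, heq]

end Detector

/-- Theorem 3.2.  There exists an attack set of cardinality at most `k`
that is unidentifiable by a Static Detector iff there exists an attack set of cardinality at
most `2k` that is undetectable by a Static Detector. -/
theorem static_unidentifiable_iff_static_undetectable_double {n p q : ℕ}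
    (C : Matrix (Fin p) (Fin n) ℝ) (D : Matrix (Fin p) (Fin q) ℝ) (k : ℕ) :
    (∃ K : Finset (Fin q), K.card ≤ k ∧ StaticallyUnidentifiable C D K) ↔
    (∃ Kbar : Finset (Fin q), Kbar.card ≤ 2 * k ∧ StaticallyUndetectable C D Kbar) := by
  constructor
  · rintro ⟨K, hK, hunid⟩
    obtain ⟨Kbar, hKbar, hundet⟩ := hunid.exists_staticallyUndetectable
    exact ⟨Kbar, by omega, hundet⟩
  · rintro ⟨Kbar, hKbar, hundet⟩
    obtain ⟨K, hK, hunid⟩ := hundet.exists_staticallyUnidentifiable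
    exact ⟨K, by omega, hunid⟩
end
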